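/- arXiv:2602.01252 — 6 statements merged into one kernel-verified Lean document; each statement's English description precedes it below -/
import Mathlib

section
/- Let b ≥ 2 and k ≥ 1 be integers, and set B = b^k. Let m ≥ 1 with gcd(m, b) = 1 and let r satisfy 0 ≤ r < m. Then there exist infinitely many positive integers n with n ≡ r (mod m) such that s_b(n) divides n and s_B(n) divides n; i.e., the arithmetic progression {n : n ≡ r (mod m)} contains infinitely many integers that are simultaneously b-Niven and b^k-Niven. -/
/-!
Fix `N ≡ r (mod m)` with `N ≡ 1 (mod b)`, so that `b` is a unit modulo `m N` and
`B ^ e ≡ 1 (mod m N)` for `B = b ^ k` and `e = φ (m N)`. The number `c = ∑_{j < N} B ^ (e j)` has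
exactly `N` nonzero digits, each equal to `1`, both in base `b` and in base `B`; and
`c ≡ N (mod m N)` because every term is `≡ 1`. Hence `N ∣ c`, `c ≡ r (mod m)`, and both digit
sums equal `N`.
Since `c ≥ N` and `N` can be taken arbitrarily large, there are infinitely many such `c`.
-/

open Finset

namespace Nat

theorem digits_sum_base_pow_mul {b : ℕ} (hb : 1 < b) (s n : ℕ) :
    (digits b (b ^ s * n)).sum = (digits b n).sum := by
  rcases n.eq_zero_or_pos with rfl | hn
  · simp
  · simp [digits_base_pow_mul hb hn]

theorem digits_sum_one_add_base_pow_mul {b M : ℕ} (hb : 1 < b) (hM : M ≠ 0) (n : ℕ) :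
    (digits b (1 + b ^ M * n)).sum = 1 + (digits b n).sum := by
  obtain ⟨M, rfl⟩ := exists_eq_succ_of_ne_zero hM
  rw [pow_succ', mul_assoc, digits_add b hb 1 _ hb (Or.inl one_ne_zero), List.sum_cons,
    digits_sum_base_pow_mul hb]

theorem digits_sum_geom_sum {b M : ℕ} (hb : 1 < b) (hM : M ≠ 0) (N : ℕ) :
    (digits b (∑ j ∈ range N, (b ^ M) ^ j)).sum = N := by
  induction N with
  | zero => simp
  | succ N ih => rw [geom_sum_succ, add_comm, digits_sum_one_add_base_pow_mul hb hM, ih, add_comm]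

theorem geom_sum_modEq_of_modEq_one {x q : ℕ} (hx : x ≡ 1 [MOD q]) (N : ℕ) :
    ∑ j ∈ range N, x ^ j ≡ N [MOD q] := by
  simpa using ModEq.sum fun j (_ : j ∈ range N) => hx.pow j

theorem exists_modEq_digits_sum_eq_of_coprime {b k q : ℕ} (hb : 1 < b) (hk : k ≠ 0)
    (hq : Coprime b q) (N : ℕ) :
    ∃ c, c ≡ N [MOD q] ∧ (digits b c).sum = N ∧ (digits (b ^ k) c).sum = N := by
  have hq0 : q ≠ 0 := by
    rintro rfl
    exact hb.ne' (coprime_zero_right b |>.1 hq)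
  set e := φ q
  have he : e ≠ 0 := (totient_pos.2 (pos_of_ne_zero hq0)).ne'
  refine ⟨∑ j ∈ range N, ((b ^ k) ^ e) ^ j, ?_, ?_, ?_⟩
  · exact geom_sum_modEq_of_modEq_one (ModEq.pow_totient (hq.pow_left k)) N
  · rw [← pow_mul]
    exact digits_sum_geom_sum hb (mul_ne_zero hk he) N
  · exact digits_sum_geom_sum (one_lt_pow hk hb) he N

end Nat

theorem stmt_0_general (b k m r : ℕ) (hb : 2 ≤ b) (hk : 1 ≤ k)
    (hgcd : Nat.gcd m b = 1) :
    {n : ℕ | 0 < n ∧ n ≡ r [MOD m] ∧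
      ((Nat.digits b n).sum ∣ n) ∧ ((Nat.digits (b ^ k) n).sum ∣ n)}.Infinite := by
  obtain ⟨N₀, hN₀m, hN₀b⟩ := Nat.chineseRemainder hgcd r 1
  refine Set.infinite_of_forall_exists_gt fun L => ?_
  set N := N₀ + m * b * (L + 1)
  have hNm : N ≡ r [MOD m] := by
    rw [show N = N₀ + m * (b * (L + 1)) by ring]
    exact Nat.add_modulus_mul_modEq_iff.2 hN₀m
  have hNb : Nat.Coprime b N := by
    have : N ≡ 1 [MOD b] := by
      rw [show N = N₀ + b * (m * (L + 1)) by ring]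
      exact Nat.add_modulus_mul_modEq_iff.2 hN₀b
    rw [Nat.coprime_comm, Nat.Coprime, this.gcd_eq, Nat.gcd_one_left]
  have hLN : L < N := by
    have hm : m ≠ 0 := by
      rintro rfl
      rw [Nat.gcd_zero_left] at hgcd
      omega
    have : L + 1 ≤ m * b * (L + 1) := Nat.le_mul_of_pos_left _ (by positivity)
    omega
  obtain ⟨c, hcN, hsb, hsB⟩ :=
    Nat.exists_modEq_digits_sum_eq_of_coprime (b := b) (k := k) (by omega) (by omega)
      ((Nat.coprime_comm.1 hgcd).mul_right hNb) N
  have hNc : N ∣ c := (hcN.dvd_iff (dvd_mul_left N m)).2 dvd_rfl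
  have hcL : L < c := hLN.trans_le (hsb ▸ Nat.digit_sum_le b c)
  exact ⟨c, ⟨by omega, (hcN.of_mul_right N).trans hNm, hsb ▸ hNc, hsB ▸ hNc⟩, hcL⟩

/-- Every arithmetic progression `r mod m` with `gcd(m,b)=1` contains infinitely many
integers that are simultaneously `b`-Niven and `b^k`-Niven. -/
theorem stmt_0 (b k m r : ℕ) (hb : 2 ≤ b) (hk : 1 ≤ k) (hm : 1 ≤ m)
    (hgcd : Nat.gcd m b = 1) (hr : r < m) :
    {n : ℕ | 0 < n ∧ n ≡ r [MOD m] ∧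
      ((Nat.digits b n).sum ∣ n) ∧ ((Nat.digits (b ^ k) n).sum ∣ n)}.Infinite :=
  stmt_0_general b k m r hb hk hgcd
end

section
/- Let b ≥ 2 and k ≥ 1 be integers with B = b^k, let m ≥ 1 with gcd(m, b) = 1, let r satisfy 0 ≤ r < m, and let s ≥ 1 satisfy s ≡ r (mod m) and gcd(s, b) = 1. Set ω = ord_{ms}(B), the multiplicative order of B modulo ms, and n = Σ_{j=0}^{s−1} B^{jω}. Then n ≡ r (mod m). -/
theorem Nat.pow_orderOf_natCast_modEq_one (x N : ℕ) : x ^ orderOf (x : ZMod N) ≡ 1 [MOD N] := by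
  rw [← ZMod.natCast_eq_natCast_iff]
  push_cast
  exact pow_orderOf_eq_one _

theorem Nat.sum_range_pow_mul_modEq_card {x ω N : ℕ} (h : x ^ ω ≡ 1 [MOD N]) (s : ℕ) :
    ∑ j ∈ Finset.range s, x ^ (j * ω) ≡ s [MOD N] := by
  induction s with
  | zero => rfl
  | succ s ih =>
    rw [Finset.sum_range_succ, mul_comm, pow_mul]
    simpa using ih.add (h.pow s)

theorem stmt_4_general (b k m r s : ℕ) (hsr : s ≡ r [MOD m])
    (ω : ℕ) (hω : ω = orderOf ((b ^ k : ℕ) : ZMod (m * s)))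
    (n : ℕ) (hn : n = ∑ j ∈ Finset.range s, (b ^ k) ^ (j * ω)) :
    n ≡ r [MOD m] := by
  have hunit : (b ^ k) ^ ω ≡ 1 [MOD m] :=
    (hω ▸ Nat.pow_orderOf_natCast_modEq_one (b ^ k) (m * s)).of_mul_right s
  exact hn ▸ (Nat.sum_range_pow_mul_modEq_card hunit s).trans hsr

/-- With `ω = ord_{ms}(b^k)` and `n = Σ_{j<s} (b^k)^{jω}`, we have `n ≡ r (mod m)`. -/
theorem stmt_4 (b k m r s : ℕ) (hb : 2 ≤ b) (hk : 1 ≤ k) (hm : 1 ≤ m)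
    (hgcd : Nat.gcd m b = 1) (hr : r < m) (hs : 1 ≤ s) (hsr : s ≡ r [MOD m])
    (hsb : Nat.gcd s b = 1)
    (ω : ℕ) (hω : ω = orderOf ((b ^ k : ℕ) : ZMod (m * s)))
    (n : ℕ) (hn : n = ∑ j ∈ Finset.range s, (b ^ k) ^ (j * ω)) :
    n ≡ r [MOD m] :=
  stmt_4_general b k m r s hsr ω hω n hn
end

section
/- Let b ≥ 2 and k ≥ 1 be integers, and set K = lcm(1, 2, ..., k). Let m ≥ 1 with gcd(m, b) = 1 and let r satisfy 0 ≤ r < m. Then there exist infinitely many positive integers n with n ≡ r (mod m) such that for every ℓ with 1 ≤ ℓ ≤ k, s_{b^ℓ}(n) divides n; i.e., n is simultaneously b^ℓ-Niven for all ℓ = 1, ..., k. -/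
/-!
Choose `D ≡ r (mod m)` coprime to `b`, and `e > 0` divisible by `k!` with `b ^ e ≡ 1 (mod m D)`.
Then `n = ∑_{j < D} b ^ (e (c + j))` is `≡ D (mod m D)`, so `n ≡ r (mod m)` and `D ∣ n`; and for
`ℓ ∣ e` it is a sum of `D` distinct powers of `b ^ ℓ`, so its base-`b ^ ℓ` digit sum is `D`.
The parameter `c` produces infinitely many such `n`.
-/

open Finset

namespace Nat

theorem digits_sum_base_pow_mul_s11 {B : ℕ} (hB : 1 < B) (k m : ℕ) :
    (B.digits (B ^ k * m)).sum = (B.digits m).sum := by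
  rcases m.eq_zero_or_pos with rfl | hm
  · simp
  · simp [digits_base_pow_mul hB hm]

theorem digits_sum_sum_range_pow_mul {B T : ℕ} (hB : 1 < B) (hT : 0 < T) (D : ℕ) :
    (B.digits (∑ j ∈ range D, B ^ (T * j))).sum = D := by
  obtain ⟨T, rfl⟩ : ∃ T', T = T' + 1 := ⟨T - 1, by omega⟩
  induction D with
  | zero => simp
  | succ D ih =>
    have hshift : ∑ j ∈ range D, B ^ ((T + 1) * (j + 1)) =
        B * (B ^ T * ∑ j ∈ range D, B ^ ((T + 1) * j)) := by
      simp only [mul_sum]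
      exact sum_congr rfl fun j _ => by ring
    rw [sum_range_succ', hshift, mul_zero, pow_zero, add_comm,
      digits_add B hB 1 _ hB (Or.inl one_ne_zero), List.sum_cons, digits_sum_base_pow_mul_s11 hB, ih,
      add_comm]

theorem digits_sum_sum_range_pow_mul_add {B T : ℕ} (hB : 1 < B) (hT : 0 < T) (c D : ℕ) :
    (B.digits (∑ j ∈ range D, B ^ (T * (c + j)))).sum = D := by
  simp only [mul_add, pow_add, ← mul_sum, digits_sum_base_pow_mul_s11 hB,
    digits_sum_sum_range_pow_mul hB hT]

theorem sum_range_pow_mul_add_modEq {b e M : ℕ} (h : b ^ e ≡ 1 [MOD M]) (c D : ℕ) :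
    ∑ j ∈ range D, b ^ (e * (c + j)) ≡ D [MOD M] :=
  calc ∑ j ∈ range D, b ^ (e * (c + j)) ≡ ∑ _j ∈ range D, 1 [MOD M] :=
        ModEq.sum fun j _ => by simpa [pow_mul] using h.pow (c + j)
    _ = D := by simp

theorem exists_dvd_pow_modEq_one {b M : ℕ} (hM : M ≠ 0) (hbM : Coprime b M) {K : ℕ}
    (hK : K ≠ 0) : ∃ e, 0 < e ∧ K ∣ e ∧ b ^ e ≡ 1 [MOD M] :=
  ⟨K * φ M, Nat.mul_pos (Nat.pos_of_ne_zero hK) (totient_pos.2 (Nat.pos_of_ne_zero hM)),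
    dvd_mul_right K _, by simpa [pow_mul] using ModEq.pow_totient (hbM.pow_left K)⟩

theorem exists_pos_modEq_coprime {b m : ℕ} (hb : 1 < b) (hmb : Coprime m b) (r : ℕ) :
    ∃ D, 0 < D ∧ D ≡ r [MOD m] ∧ Coprime D b := by
  obtain ⟨D, hDm, hDb⟩ := chineseRemainder hmb r 1
  refine ⟨D, Nat.pos_of_ne_zero ?_, hDm, ?_⟩
  · rintro rfl
    simp [ModEq, mod_eq_of_lt hb] at hDb
  · rw [Coprime, hDb.gcd_eq, gcd_one_left]

theorem strictMono_sum_range_pow_mul_add {b e D : ℕ} (hb : 1 < b) (he : 0 < e) (hD : 0 < D) :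
    StrictMono fun c => ∑ j ∈ range D, b ^ (e * (c + j)) := fun _ _ hcc' =>
  sum_lt_sum_of_nonempty (nonempty_range_iff.2 hD.ne') fun _ _ =>
    Nat.pow_lt_pow_right hb ((Nat.mul_lt_mul_left he).2 (by omega))

theorem digits_pow_sum_sum_range_pow_mul_add {b ℓ e : ℕ} (hb : 1 < b) (he : 0 < e) (hℓ : ℓ ∣ e)
    (c D : ℕ) : ((b ^ ℓ).digits (∑ j ∈ range D, b ^ (e * (c + j)))).sum = D := by
  obtain ⟨q, rfl⟩ := hℓ
  have hpow : ∀ j, b ^ (ℓ * q * (c + j)) = (b ^ ℓ) ^ (q * (c + j)) := fun j => by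
    rw [mul_assoc, pow_mul]
  simp only [hpow]
  exact digits_sum_sum_range_pow_mul_add (one_lt_pow (left_ne_zero_of_mul he.ne') hb)
    (Nat.pos_of_ne_zero (right_ne_zero_of_mul he.ne')) c D

end Nat

open Nat

theorem stmt_11_general (b k m r : ℕ) (hb : 2 ≤ b)
    (hgcd : Nat.gcd m b = 1) :
    {n : ℕ | 0 < n ∧ n ≡ r [MOD m] ∧
      ∀ ℓ : ℕ, 1 ≤ ℓ → ℓ ≤ k → (Nat.digits (b ^ ℓ) n).sum ∣ n}.Infinite := by
  obtain ⟨D, hD, hDr, hDb⟩ := exists_pos_modEq_coprime hb hgcd r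
  have hm : m ≠ 0 := by rintro rfl; simp at hgcd; omega
  obtain ⟨e, he, hke, hbe⟩ := exists_dvd_pow_modEq_one (mul_ne_zero hm hD.ne')
    (Coprime.mul_right (Coprime.symm hgcd) hDb.symm) k.factorial_ne_zero
  refine Set.infinite_of_injective_forall_mem
    (strictMono_sum_range_pow_mul_add hb he hD).injective fun c => ?_
  have hmod : ∑ j ∈ range D, b ^ (e * (c + j)) ≡ D [MOD m * D] :=
    sum_range_pow_mul_add_modEq hbe c D
  refine ⟨sum_pos (fun _ _ => by positivity) (nonempty_range_iff.2 hD.ne'),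
    (hmod.of_mul_right D).trans hDr, fun ℓ hℓ hℓk => ?_⟩
  rw [digits_pow_sum_sum_range_pow_mul_add hb he ((dvd_factorial hℓ hℓk).trans hke)]
  exact (hmod.dvd_iff (dvd_mul_left D m)).2 dvd_rfl

/-- Every progression `r mod m` with `gcd(m,b)=1` contains infinitely many integers
that are simultaneously `b^ℓ`-Niven for all `ℓ = 1, ..., k`. -/
theorem stmt_11 (b k m r : ℕ) (hb : 2 ≤ b) (hk : 1 ≤ k) (hm : 1 ≤ m)
    (hgcd : Nat.gcd m b = 1) (hr : r < m) :
    {n : ℕ | 0 < n ∧ n ≡ r [MOD m] ∧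
      ∀ ℓ : ℕ, 1 ≤ ℓ → ℓ ≤ k → (Nat.digits (b ^ ℓ) n).sum ∣ n}.Infinite :=
  stmt_11_general b k m r hb hgcd
end

section
/- Let b ≥ 2 and k ≥ 1 be integers, set K = lcm(1, 2, ..., k) and B̄ = b^K. Let m ≥ 1 with gcd(m, b) = 1, and let s ≥ 1 satisfy gcd(s, b) = 1. Set Ω = ord_{ms}(B̄), the multiplicative order of B̄ modulo ms, and N = Σ_{j=0}^{s−1} B̄^{jΩ}. Then for every ℓ with 1 ≤ ℓ ≤ k, the base-b^ℓ digit sum of N equals s, i.e., s_{b^ℓ}(N) = s. -/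
/-!
Every `ℓ ≤ k` divides `K`, so `B̄ ^ Ω = (b ^ ℓ) ^ e` with `e = (K / ℓ) Ω ≥ 1`. Hence
`N = Σ_{j<s} (b ^ ℓ) ^ (j e)` is written in base `b ^ ℓ` with exactly `s` digits equal to `1`,
separated by blocks of zeros; `Ω ≥ 1` because `B̄` is a unit modulo `ms`.
-/

namespace Nat

theorem digits_sum_one_add_base_pow_mul_s13 {B e : ℕ} (hB : 1 < B) (he : e ≠ 0) (n : ℕ) :
    (digits B (1 + B ^ e * n)).sum = 1 + (digits B n).sum := by
  rcases n.eq_zero_or_pos with rfl | hn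
  · simp [digits_of_lt B 1 one_ne_zero hB]
  have hlen : (digits B 1).length + (e - 1) = e := by
    rw [digits_of_lt B 1 one_ne_zero hB]; simp only [List.length_singleton]; omega
  rw [← hlen, ← digits_append_zeroes_append_digits hB hn, digits_of_lt B 1 one_ne_zero hB]
  simp

theorem digits_sum_geom_sum_base_pow {B e : ℕ} (hB : 1 < B) (he : e ≠ 0) (s : ℕ) :
    (digits B (∑ j ∈ Finset.range s, (B ^ e) ^ j)).sum = s := by
  induction s with
  | zero => simp
  | succ s ih =>
    simp only [Finset.sum_range_succ', pow_succ', ← Finset.mul_sum, pow_zero]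
    rw [add_comm, digits_sum_one_add_base_pow_mul_s13 hB he, ih, add_comm]

end Nat

theorem ZMod.orderOf_natCast_pos {a n : ℕ} [NeZero n] (h : a.Coprime n) :
    0 < orderOf (a : ZMod n) := by
  rw [← ZMod.coe_unitOfCoprime a h, orderOf_units]
  exact orderOf_pos _

theorem stmt_13_general (b k m s : ℕ) (hb : 2 ≤ b) (hm : 1 ≤ m)
    (hgcd : Nat.gcd m b = 1) (hs : 1 ≤ s) (hsb : Nat.gcd s b = 1)
    (K : ℕ) (hK : K = Finset.lcm (Finset.Icc 1 k) id)
    (Ω : ℕ) (hΩ : Ω = orderOf ((b ^ K : ℕ) : ZMod (m * s)))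
    (N : ℕ) (hN : N = ∑ j ∈ Finset.range s, (b ^ K) ^ (j * Ω)) :
    ∀ ℓ : ℕ, 1 ≤ ℓ → ℓ ≤ k → (Nat.digits (b ^ ℓ) N).sum = s := by
  intro ℓ hℓ hℓk
  have hK0 : K ≠ 0 := by
    simp only [hK, ne_eq, Finset.lcm_eq_zero_iff, Finset.mem_Icc, id, not_exists, not_and]
    omega
  have hΩ0 : Ω ≠ 0 := by
    have : NeZero (m * s) := ⟨by positivity⟩
    have hcop : (b ^ K).Coprime (m * s) :=
      .pow_left K (.mul_right (Nat.Coprime.symm hgcd) (Nat.Coprime.symm hsb))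
    exact hΩ ▸ (ZMod.orderOf_natCast_pos hcop).ne'
  obtain ⟨c, hc⟩ : ℓ ∣ K := hK ▸ Finset.dvd_lcm (Finset.mem_Icc.2 ⟨hℓ, hℓk⟩)
  have hc0 : c ≠ 0 := by rintro rfl; exact hK0 (by simpa using hc)
  have hN' : N = ∑ j ∈ Finset.range s, ((b ^ ℓ) ^ (c * Ω)) ^ j := by
    rw [hN]
    refine Finset.sum_congr rfl fun j _ => ?_
    rw [← pow_mul, ← pow_mul, ← pow_mul, hc]
    ring_nf
  rw [hN']
  exact Nat.digits_sum_geom_sum_base_pow (Nat.one_lt_pow (by omega) (by omega)) (by positivity) s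

/-- With `K = lcm(1,…,k)`, `B̄ = b^K`, `Ω = ord_{ms}(B̄)` and `N = Σ_{j<s} B̄^{jΩ}`,
the base-`b^ℓ` digit sum of `N` equals `s` for every `1 ≤ ℓ ≤ k`. -/
theorem stmt_13 (b k m s : ℕ) (hb : 2 ≤ b) (hk : 1 ≤ k) (hm : 1 ≤ m)
    (hgcd : Nat.gcd m b = 1) (hs : 1 ≤ s) (hsb : Nat.gcd s b = 1)
    (K : ℕ) (hK : K = Finset.lcm (Finset.Icc 1 k) id)
    (Ω : ℕ) (hΩ : Ω = orderOf ((b ^ K : ℕ) : ZMod (m * s)))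
    (N : ℕ) (hN : N = ∑ j ∈ Finset.range s, (b ^ K) ^ (j * Ω)) :
    ∀ ℓ : ℕ, 1 ≤ ℓ → ℓ ≤ k → (Nat.digits (b ^ ℓ) N).sum = s :=
  stmt_13_general b k m s hb hm hgcd hs hsb K hK Ω hΩ N hN
end

section
/- Let b ≥ 2 be an integer, let m ≥ 1 with gcd(m, b) = 1, let r satisfy 0 ≤ r < m, and let s ≥ 1 satisfy s ≡ r (mod m) and gcd(s, b) = 1. Set ω = ord_{ms}(b), the multiplicative order of b modulo ms, and n = Σ_{j=0}^{s−1} b^{jω}. Then n ≡ s (mod ms), s_b(n) = s, and hence n ≡ r (mod m) and n is b-Niven. -/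
/-!
Since `b ^ ω ≡ 1 (mod ms)`, every summand of `n = Σ_{j<s} b^{jω}` is `1` modulo `ms`, so
`n ≡ s (mod ms)`; in particular `s ∣ n`. As `ω ≥ 1`, the base-`b` expansion of `n` consists of
`s` digits equal to `1` separated by blocks of zeros, so its digit sum is `s`.
-/

namespace Nat

theorem digits_sum_one_add_pow_mul {b ω : ℕ} (hb : 1 < b) (hω : 1 ≤ ω) (x : ℕ) :
    (b.digits (1 + b ^ ω * x)).sum = 1 + (b.digits x).sum := by
  have hone : b.digits 1 = [1] := digits_of_lt b 1 one_ne_zero hb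
  rcases x.eq_zero_or_pos with rfl | hx
  · simp [hone]
  have hlen : (b.digits 1).length + (ω - 1) = ω := by rw [hone, List.length_singleton]; omega
  rw [← hlen, ← digits_append_zeroes_append_digits hb hx]
  simp [hone]

theorem digits_sum_geom_sum_pow_mul {b ω : ℕ} (hb : 1 < b) (hω : 1 ≤ ω) (s : ℕ) :
    (b.digits (∑ j ∈ Finset.range s, b ^ (j * ω))).sum = s := by
  induction s with
  | zero => simp
  | succ t ih =>
    have hsplit : ∑ j ∈ Finset.range (t + 1), b ^ (j * ω)
        = 1 + b ^ ω * ∑ j ∈ Finset.range t, b ^ (j * ω) := by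
      rw [Finset.sum_range_succ', Finset.mul_sum, add_comm]
      simp only [zero_mul, pow_zero, ← pow_add, add_mul, one_mul, add_comm ω]
    rw [hsplit, digits_sum_one_add_pow_mul hb hω, ih, add_comm]

theorem geom_sum_pow_mul_modEq {b ω N : ℕ} (h : b ^ ω ≡ 1 [MOD N]) (s : ℕ) :
    ∑ j ∈ Finset.range s, b ^ (j * ω) ≡ s [MOD N] := by
  rw [← ZMod.natCast_eq_natCast_iff] at h ⊢
  push_cast at h ⊢
  simp [pow_mul', h]

end Nat

theorem ZMod.orderOf_natCast_pos_s15 {N b : ℕ} [NeZero N] (h : b.Coprime N) :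
    0 < orderOf (b : ZMod N) :=
  orderOf_pos_iff.mpr ((ZMod.isUnit_iff_coprime b N).mpr h).isOfFinOrder

theorem stmt_15_general (b m r s : ℕ) (hb : 2 ≤ b) (hm : 1 ≤ m)
    (hgcd : Nat.gcd m b = 1) (hs : 1 ≤ s) (hsr : s ≡ r [MOD m])
    (hsb : Nat.gcd s b = 1)
    (ω : ℕ) (hω : ω = orderOf ((b : ℕ) : ZMod (m * s)))
    (n : ℕ) (hn : n = ∑ j ∈ Finset.range s, b ^ (j * ω)) :
    n ≡ s [MOD m * s] ∧ (Nat.digits b n).sum = s ∧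
      n ≡ r [MOD m] ∧ (Nat.digits b n).sum ∣ n := by
  have : NeZero (m * s) := ⟨(Nat.mul_pos hm hs).ne'⟩
  have hcop : b.Coprime (m * s) := Nat.Coprime.mul_right (Nat.Coprime.symm hgcd) (Nat.Coprime.symm hsb)
  have hω_pos : 1 ≤ ω := hω ▸ ZMod.orderOf_natCast_pos_s15 hcop
  have hpow : b ^ ω ≡ 1 [MOD m * s] := by
    rw [← ZMod.natCast_eq_natCast_iff, hω]
    push_cast
    exact pow_orderOf_eq_one _
  have hmod : n ≡ s [MOD m * s] := hn ▸ Nat.geom_sum_pow_mul_modEq hpow s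
  have hdig : (Nat.digits b n).sum = s := hn ▸ Nat.digits_sum_geom_sum_pow_mul hb hω_pos s
  refine ⟨hmod, hdig, (hmod.of_mul_right s).trans hsr, ?_⟩
  rw [hdig]
  exact (hmod.dvd_iff (dvd_mul_left s m)).mpr dvd_rfl

/-- Single-base case: with `ω = ord_{ms}(b)` and `n = Σ_{j<s} b^{jω}`, we have
`n ≡ s (mod ms)`, `s_b(n) = s`, hence `n ≡ r (mod m)` and `n` is `b`-Niven. -/
theorem stmt_15 (b m r s : ℕ) (hb : 2 ≤ b) (hm : 1 ≤ m)
    (hgcd : Nat.gcd m b = 1) (hr : r < m) (hs : 1 ≤ s) (hsr : s ≡ r [MOD m])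
    (hsb : Nat.gcd s b = 1)
    (ω : ℕ) (hω : ω = orderOf ((b : ℕ) : ZMod (m * s)))
    (n : ℕ) (hn : n = ∑ j ∈ Finset.range s, b ^ (j * ω)) :
    n ≡ s [MOD m * s] ∧ (Nat.digits b n).sum = s ∧
      n ≡ r [MOD m] ∧ (Nat.digits b n).sum ∣ n :=
  stmt_15_general b m r s hb hm hgcd hs hsr hsb ω hω n hn
end

section
/- Let b ≥ 2 be an integer, let m ≥ 1 with gcd(m, b) = 1, and let r satisfy 0 ≤ r < m. Then there exist infinitely many positive integers n with n ≡ r (mod m) such that s_b(n) divides n; i.e., the arithmetic progression {n : n ≡ r (mod m)} contains infinitely many b-Niven numbers. -/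
/-!
Pick `s` with `s ≡ r [MOD m]` and `s ≡ 1 [MOD b]` (Chinese remainder theorem); then `b` is
coprime to `M = s * m`, so `b ^ d ≡ 1 [MOD M]` for `d = φ M`. The number `∑ i < s, b ^ (d * i)`
has `s` digits `1` and all others `0`, and is `≡ s [MOD M]`; the same holds after multiplying it
by any `b ^ (d * j)`. Each such number is `≡ r [MOD m]` and divisible by its digit sum `s`.
-/

open Finset

theorem Nat.digits_sum_base_pow_mul_s16 {b : ℕ} (hb : 1 < b) (k n : ℕ) :
    (b.digits (b ^ k * n)).sum = (b.digits n).sum := by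
  rcases n.eq_zero_or_pos with rfl | hn
  · simp
  · simp [Nat.digits_base_pow_mul hb hn]

theorem Nat.digits_sum_sum_range_pow_mul_s16 {b d : ℕ} (hb : 1 < b) (hd : d ≠ 0) (k : ℕ) :
    (b.digits (∑ i ∈ range k, b ^ (d * i))).sum = k := by
  obtain ⟨e, rfl⟩ := Nat.exists_eq_add_one_of_ne_zero hd
  induction k with
  | zero => simp
  | succ k ih =>
    have hstep : ∑ i ∈ range (k + 1), b ^ ((e + 1) * i)
        = 1 + b * (b ^ e * ∑ i ∈ range k, b ^ ((e + 1) * i)) := by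
      rw [sum_range_succ', mul_sum, mul_sum, add_comm, mul_zero, pow_zero]
      exact congrArg (1 + ·) (sum_congr rfl fun i _ ↦ by ring)
    rw [hstep, Nat.digits_add b hb 1 _ hb (Or.inl one_ne_zero), List.sum_cons,
      Nat.digits_sum_base_pow_mul_s16 hb, ih, add_comm]

theorem Nat.sum_range_pow_mul_modEq {b d M : ℕ} (h : b ^ d ≡ 1 [MOD M]) (k : ℕ) :
    ∑ i ∈ range k, b ^ (d * i) ≡ k [MOD M] := by
  rw [← ZMod.natCast_eq_natCast_iff] at h ⊢
  push_cast at h ⊢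
  simp [pow_mul, h]

theorem setOf_modEq_digits_sum_eq_infinite {b M s : ℕ} (hb : 1 < b) (hbM : b.Coprime M)
    (hs : s ≠ 0) : {n | n ≡ s [MOD M] ∧ (b.digits n).sum = s}.Infinite := by
  have hM : M ≠ 0 := by rintro rfl; simp_all
  set d := M.totient
  have hd : d ≠ 0 := (Nat.totient_pos.mpr (Nat.pos_of_ne_zero hM)).ne'
  have hbd : b ^ d ≡ 1 [MOD M] := Nat.ModEq.pow_totient hbM
  set A := ∑ i ∈ range s, b ^ (d * i)
  have hAmod : A ≡ s [MOD M] := Nat.sum_range_pow_mul_modEq hbd s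
  have hAsum : (b.digits A).sum = s := Nat.digits_sum_sum_range_pow_mul_s16 hb hd s
  have hA : A ≠ 0 := by intro h; simp [h, eq_comm, hs] at hAsum
  refine Set.infinite_of_injective_forall_mem (f := fun j ↦ b ^ (d * j) * A)
    ((mul_left_injective₀ hA).comp ((Nat.pow_right_injective hb).comp (mul_right_injective₀ hd)))
    fun j ↦ ⟨?_, ?_⟩
  · simpa [pow_mul] using (hbd.pow j).mul hAmod
  · rw [Nat.digits_sum_base_pow_mul_s16 hb, hAsum]

theorem stmt_16_general (b m r : ℕ) (hb : 2 ≤ b)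
    (hgcd : Nat.gcd m b = 1) :
    {n : ℕ | 0 < n ∧ n ≡ r [MOD m] ∧ (Nat.digits b n).sum ∣ n}.Infinite := by
  obtain ⟨s, hsr, hs1⟩ := Nat.chineseRemainder hgcd r 1
  have hsb : s.Coprime b := by rw [Nat.Coprime, hs1.gcd_eq, Nat.gcd_one_left]
  have hs : s ≠ 0 := by
    rintro rfl
    simp at hsb
    omega
  refine (setOf_modEq_digits_sum_eq_infinite hb
    (Nat.Coprime.mul_right hsb.symm (Nat.Coprime.symm hgcd)) hs).mono ?_
  rintro n ⟨hn, hsum⟩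
  refine ⟨Nat.pos_of_ne_zero ?_, (hn.of_mul_left s).trans hsr, ?_⟩
  · rintro rfl
    simp at hsum
    exact hs hsum.symm
  · rw [hsum, hn.dvd_iff (dvd_mul_right s m)]

/-- Every arithmetic progression `r mod m` with `gcd(m,b)=1` contains infinitely many
`b`-Niven numbers. -/
theorem stmt_16 (b m r : ℕ) (hb : 2 ≤ b) (hm : 1 ≤ m)
    (hgcd : Nat.gcd m b = 1) (hr : r < m) :
    {n : ℕ | 0 < n ∧ n ≡ r [MOD m] ∧ (Nat.digits b n).sum ∣ n}.Infinite :=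
  stmt_16_general b m r hb hgcd
end
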